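/- Adler's map R_{α,β}(x,y) = (y + (α−β)/(x+y), x − (α−β)/(x+y)) satisfies the parametric Yang–Baxter equation R²³_{β,γ} ∘ R¹³_{α,γ} ∘ R¹²_{α,β} = R¹²_{α,β} ∘ R¹³_{α,γ} ∘ R²³_{β,γ}, wherever defined. -/

import Mathlib

noncomputable section

/-- First component of the map. -/
def uYB (α β x y : ℂ) : ℂ := y + (α-β)/(x+y)

/-- Second component of the map. -/
def vYB (α β x y : ℂ) : ℂ := x - (α-β)/(x+y)

/-- The denominator appearing in the map. -/
def dYB (α β x y : ℂ) : ℂ := x+y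

/-!
Adler's map preserves the sum of its two arguments, so both sides of the Yang–Baxter equation
preserve `x + y + z`, and it suffices to compare the first and third components. With
`s = x + y`, `t = y + z`, `P = s t + (α - β)` and `Q = s t - (β - γ)`, every intermediate sum is
one of `P / s`, `Q / t`, `s Q / P`, `t P / Q`, and both comparisons reduce to the identity
`(α - β) Q + (β - γ) P = (α - γ) s t`.
-/

section AdlerMap

variable {α β γ x y z u v N D : ℂ}

theorem add_eq_of_eq_uYB_of_eq_vYB (hu : u = uYB α β x y) (hv : v = vYB α β x y) :
    u + v = x + y := by
  rw [hu, hv, uYB, vYB]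
  ring

theorem uYB_eq_of_add_eq_div (h : x + y = N / D) : uYB α β x y = y + (α - β) * D / N := by
  rw [uYB, h, div_div_eq_mul_div]

theorem vYB_eq_of_add_eq_div (h : x + y = N / D) : vYB α β x y = x - (α - β) * D / N := by
  rw [vYB, h, div_div_eq_mul_div]

theorem uYB_add_eq_div (hs : x + y ≠ 0) :
    uYB α β x y + z = ((x + y) * (y + z) + (α - β)) / (x + y) := by
  rw [uYB]
  field_simp
  ring

theorem add_vYB_eq_div (ht : y + z ≠ 0) :
    x + vYB β γ y z = ((x + y) * (y + z) - (β - γ)) / (y + z) := by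
  rw [vYB]
  field_simp
  ring

theorem vYB_add_vYB_uYB_eq_div (hs : x + y ≠ 0) (hP : (x + y) * (y + z) + (α - β) ≠ 0) :
    vYB α β x y + vYB α γ (uYB α β x y) z
      = (x + y) * ((x + y) * (y + z) - (β - γ)) / ((x + y) * (y + z) + (α - β)) := by
  rw [vYB_eq_of_add_eq_div (uYB_add_eq_div hs), vYB, uYB]
  field_simp
  ring

theorem uYB_vYB_add_uYB_eq_div (ht : y + z ≠ 0) (hQ : (x + y) * (y + z) - (β - γ) ≠ 0) :
    uYB α γ x (vYB β γ y z) + uYB β γ y z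
      = (y + z) * ((x + y) * (y + z) + (α - β)) / ((x + y) * (y + z) - (β - γ)) := by
  have hsum : uYB β γ y z + vYB β γ y z = y + z := add_eq_of_eq_uYB_of_eq_vYB rfl rfl
  rw [uYB_eq_of_add_eq_div (add_vYB_eq_div ht), eq_div_iff hQ]
  linear_combination ((x + y) * (y + z) - (β - γ)) * hsum + div_mul_cancel₀ ((α - γ) * (y + z)) hQ

variable (hs : x + y ≠ 0) (ht : y + z ≠ 0)
  (hP : (x + y) * (y + z) + (α - β) ≠ 0) (hQ : (x + y) * (y + z) - (β - γ) ≠ 0)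
include hs ht hP hQ

theorem uYB_uYB_eq_uYB_uYB_uYB :
    uYB α γ (uYB α β x y) z = uYB α β (uYB α γ x (vYB β γ y z)) (uYB β γ y z) := by
  rw [uYB_eq_of_add_eq_div (uYB_add_eq_div hs),
    uYB_eq_of_add_eq_div (uYB_vYB_add_uYB_eq_div ht hQ), uYB]
  field_simp
  ring

theorem vYB_vYB_uYB_eq_vYB_vYB :
    vYB β γ (vYB α β x y) (vYB α γ (uYB α β x y) z) = vYB α γ x (vYB β γ y z) := by
  rw [vYB_eq_of_add_eq_div (vYB_add_vYB_uYB_eq_div hs hP),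
    vYB_eq_of_add_eq_div (add_vYB_eq_div ht), vYB]
  field_simp
  ring

end AdlerMap

theorem adler_YangBaxter_general (α β γ x y z : ℂ)
    (x₁ y₁ x₂ z₁ y₂ z₂ ty tz tx tzz txx tyy : ℂ)
    -- left-hand side  R²³_(β,γ) ∘ R¹³_(α,γ) ∘ R¹²_(α,β) (x,y,z):
    (hx₁ : x₁ = uYB α β x y) (hy₁ : y₁ = vYB α β x y)
    (hx₂ : x₂ = uYB α γ x₁ z) (hz₁ : z₁ = vYB α γ x₁ z)
    (hy₂ : y₂ = uYB β γ y₁ z₁) (hz₂ : z₂ = vYB β γ y₁ z₁)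
    -- right-hand side  R¹²_(α,β) ∘ R¹³_(α,γ) ∘ R²³_(β,γ) (x,y,z):
    (hty : ty = uYB β γ y z) (htz : tz = vYB β γ y z)
    (htx : tx = uYB α γ x tz) (htzz : tzz = vYB α γ x tz)
    (htxx : txx = uYB α β tx ty) (htyy : tyy = vYB α β tx ty)
    -- all denominators nonzero:
    (h1 : dYB α β x y ≠ 0) (h2 : dYB α γ x₁ z ≠ 0)
    (h4 : dYB β γ y z ≠ 0) (h5 : dYB α γ x tz ≠ 0) :
    x₂ = txx ∧ y₂ = tyy ∧ z₂ = tzz := by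
  have hs : x + y ≠ 0 := h1
  have ht : y + z ≠ 0 := h4
  have hP : (x + y) * (y + z) + (α - β) ≠ 0 := by
    rw [dYB, hx₁, uYB_add_eq_div hs] at h2
    exact (div_ne_zero_iff.mp h2).1
  have hQ : (x + y) * (y + z) - (β - γ) ≠ 0 := by
    rw [dYB, htz, add_vYB_eq_div ht] at h5
    exact (div_ne_zero_iff.mp h5).1
  have hx : x₂ = txx := by
    rw [hx₂, hx₁, htxx, htx, htz, hty]
    exact uYB_uYB_eq_uYB_uYB_uYB hs ht hP hQ
  have hz : z₂ = tzz := by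
    rw [hz₂, hy₁, hz₁, hx₁, htzz, htz]
    exact vYB_vYB_uYB_eq_vYB_vYB hs ht hP hQ
  refine ⟨hx, ?_, hz⟩
  linear_combination add_eq_of_eq_uYB_of_eq_vYB hy₂ hz₂ + add_eq_of_eq_uYB_of_eq_vYB hx₂ hz₁
    + add_eq_of_eq_uYB_of_eq_vYB hx₁ hy₁ - add_eq_of_eq_uYB_of_eq_vYB htxx htyy
    - add_eq_of_eq_uYB_of_eq_vYB htx htzz - add_eq_of_eq_uYB_of_eq_vYB hty htz - hx - hz

/-- Adler's map `R_(α,β)(x,y) = (y+(α−β)/(x+y), x−(α−β)/(x+y))` satisfies the parametric Yang–Baxter equation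
`R²³ ∘ R¹³ ∘ R¹² = R¹² ∘ R¹³ ∘ R²³` on `ℂ³`, wherever all denominators are nonzero. -/
theorem adler_YangBaxter (α β γ x y z : ℂ)
    (x₁ y₁ x₂ z₁ y₂ z₂ ty tz tx tzz txx tyy : ℂ)
    -- left-hand side  R²³_(β,γ) ∘ R¹³_(α,γ) ∘ R¹²_(α,β) (x,y,z):
    (hx₁ : x₁ = uYB α β x y) (hy₁ : y₁ = vYB α β x y)
    (hx₂ : x₂ = uYB α γ x₁ z) (hz₁ : z₁ = vYB α γ x₁ z)
    (hy₂ : y₂ = uYB β γ y₁ z₁) (hz₂ : z₂ = vYB β γ y₁ z₁)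
    -- right-hand side  R¹²_(α,β) ∘ R¹³_(α,γ) ∘ R²³_(β,γ) (x,y,z):
    (hty : ty = uYB β γ y z) (htz : tz = vYB β γ y z)
    (htx : tx = uYB α γ x tz) (htzz : tzz = vYB α γ x tz)
    (htxx : txx = uYB α β tx ty) (htyy : tyy = vYB α β tx ty)
    -- all denominators nonzero:
    (h1 : dYB α β x y ≠ 0) (h2 : dYB α γ x₁ z ≠ 0) (h3 : dYB β γ y₁ z₁ ≠ 0)
    (h4 : dYB β γ y z ≠ 0) (h5 : dYB α γ x tz ≠ 0) (h6 : dYB α β tx ty ≠ 0) :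
    x₂ = txx ∧ y₂ = tyy ∧ z₂ = tzz :=
  adler_YangBaxter_general α β γ x y z x₁ y₁ x₂ z₁ y₂ z₂ ty tz tx tzz txx tyy hx₁ hy₁ hx₂ hz₁ hy₂
    hz₂ hty htz htx htzz htxx htyy h1 h2 h4 h5

end
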